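/- arXiv:2002.12862 — 3 statements merged into one kernel-verified Lean document; each statement's English description precedes it below -/
import Mathlib

section
/- Suppose that κ < λ are regular uncountable cardinals. If Refl(2, λ) holds (every pair of stationary subsets of λ reflects simultaneously at some ordinal of uncountable cofinality below λ), then there is no □(λ,<κ)-sequence that is not full; that is, every □(λ,<κ)-sequence is full. -/
/-- `α` is a limit point of the set of ordinals `C`:
`α > 0` and `C ∩ α` is unbounded in `α`. -/
def IsLimitPointOf (C : Set Ordinal.{0}) (α : Ordinal.{0}) : Prop :=
  0 < α ∧ ∀ β < α, ∃ γ ∈ C, β < γ ∧ γ < α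

/-- `C` is a club (closed and unbounded) subset of the ordinal `δ`. -/
def IsClubIn (C : Set Ordinal.{0}) (δ : Ordinal.{0}) : Prop :=
  C ⊆ Set.Iio δ ∧ (∀ β < δ, ∃ γ ∈ C, β < γ) ∧ ∀ α < δ, IsLimitPointOf C α → α ∈ C

/-- `S` is stationary in `δ`: `S` meets every club subset of `δ`. -/
def IsStationaryIn (S : Set Ordinal.{0}) (δ : Ordinal.{0}) : Prop :=
  ∀ C, IsClubIn C δ → (S ∩ C).Nonempty

/-- `S` reflects at `α`: `α` has uncountable cofinality and `S ∩ α` is stationary in `α`. -/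
def ReflectsAt (S : Set Ordinal.{0}) (α : Ordinal.{0}) : Prop :=
  Cardinal.aleph0 < α.cof ∧ IsStationaryIn (S ∩ Set.Iio α) α

/-- `𝒞` is a coherent sequence of length `lam`: for every limit `α < lam`, `𝒞 α` is a
nonempty collection of clubs in `α` which coheres at limit points. -/
def IsCoherentSeq (lam : Ordinal.{0}) (𝒞 : Ordinal.{0} → Set (Set Ordinal.{0})) : Prop :=
  ∀ α < lam, Order.IsSuccLimit α →
    (𝒞 α).Nonempty ∧ (∀ C ∈ 𝒞 α, IsClubIn C α) ∧
      ∀ C ∈ 𝒞 α, ∀ β < α, IsLimitPointOf C β → C ∩ Set.Iio β ∈ 𝒞 β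

/-- The coherent sequence `𝒞` has width `< κ`. -/
def HasWidthLT (lam : Ordinal.{0}) (𝒞 : Ordinal.{0} → Set (Set Ordinal.{0}))
    (kappa : Cardinal.{0}) : Prop :=
  ∀ α < lam, Order.IsSuccLimit α → Cardinal.mk ↥(𝒞 α) < Cardinal.lift.{1} kappa

/-- `T` is a thread through the coherent sequence `𝒞` of length `lam`. -/
def IsThread (lam : Ordinal.{0}) (𝒞 : Ordinal.{0} → Set (Set Ordinal.{0}))
    (T : Set Ordinal.{0}) : Prop :=
  IsClubIn T lam ∧ ∀ β < lam, IsLimitPointOf T β → T ∩ Set.Iio β ∈ 𝒞 β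

/-- The sequence `𝒞` is full: for unboundedly many `α < lam` there is a club of
`β < lam` such that `α` is a limit point of some `C ∈ 𝒞 β`. -/
def IsFull (lam : Ordinal.{0}) (𝒞 : Ordinal.{0} → Set (Set Ordinal.{0})) : Prop :=
  ∀ ξ < lam, ∃ α, ξ ≤ α ∧ α < lam ∧
    ∃ D, IsClubIn D lam ∧ ∀ β ∈ D, ∃ C ∈ 𝒞 β, IsLimitPointOf C α

/-! If `𝒞` is not full, then above some `ξ < λ` every set `noneAccumulateAt 𝒞 γ` of those `β`
for which no club in `𝒞 β` has `γ` as a limit point is stationary. For some `γ ≥ ξ` the set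
`allAccumulateAt 𝒞 γ` of those `β` for which every club in `𝒞 β` has `γ` as a limit point is
stationary too: otherwise clubs `B γ` witness the contrary, and a point `b` of cofinality `≥ κ`
in their diagonal intersection contradicts the fact that the fewer than `κ` clubs in `𝒞 b` have
a common limit point `γ < b`. `Refl(2, λ)` reflects both sets at some `δ`. Tracing a club
`C ∈ 𝒞 δ` by coherence at limit points of `C` in the two sets shows that `γ` both is and is not
a limit point of `C`. -/

open Cardinal Ordinal Order Set

section Clubs

variable {C D : Set Ordinal.{0}} {α β γ δ ρ : Ordinal.{0}}

theorem IsLimitPointOf.mono (h : C ⊆ D) (hα : IsLimitPointOf C α) : IsLimitPointOf D α :=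
  ⟨hα.1, fun β hβ => (hα.2 β hβ).imp fun _ ⟨hC, hlt⟩ => ⟨h hC, hlt⟩⟩

theorem IsLimitPointOf.inter_Iio (hα : IsLimitPointOf C α) (hαβ : α ≤ β) :
    IsLimitPointOf (C ∩ Iio β) α :=
  ⟨hα.1, fun y hy => (hα.2 y hy).imp fun _ ⟨hC, h₁, h₂⟩ => ⟨⟨hC, h₂.trans_le hαβ⟩, h₁, h₂⟩⟩

theorem IsLimitPointOf.le_of_inter_Iio (hα : IsLimitPointOf (C ∩ Iio β) α) : α ≤ β := by
  by_contra! hβα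
  obtain ⟨c, ⟨-, hcβ⟩, hβc, -⟩ := hα.2 β hβα
  exact hcβ.not_gt hβc

theorem isSuccLimit_of_aleph0_le_cof (h : ℵ₀ ≤ δ.cof) : IsSuccLimit δ :=
  one_lt_cof_iff.1 (aleph0_le_cof_iff.1 h)

theorem isClubIn_Iio (hδ : IsSuccLimit δ) : IsClubIn (Iio δ) δ :=
  ⟨subset_rfl, fun β hβ => ⟨succ β, hδ.succ_lt hβ, lt_succ β⟩, fun _ hα _ => hα⟩

theorem IsClubIn.inter_Ioi (hC : IsClubIn C δ) (hρ : ρ < δ) : IsClubIn (C ∩ Ioi ρ) δ := by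
  obtain ⟨hsub, hunb, hcl⟩ := hC
  refine ⟨fun x hx => hsub hx.1, fun β hβ => ?_, fun α hα hlp => ?_⟩
  · obtain ⟨γ, hγ, hγ'⟩ := hunb (max β ρ) (max_lt hβ hρ)
    exact ⟨γ, ⟨hγ, (le_max_right _ _).trans_lt hγ'⟩, (le_max_left _ _).trans_lt hγ'⟩
  · obtain ⟨c, hc, -, hcα⟩ := hlp.2 0 hlp.1
    exact ⟨hcl α hα (hlp.mono inter_subset_left), hc.2.trans hcα⟩

theorem IsStationaryIn.mono {S T : Set Ordinal.{0}} (hS : IsStationaryIn S δ) (h : S ⊆ T) :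
    IsStationaryIn T δ :=
  fun C hC => (hS C hC).mono (inter_subset_inter_left C h)

theorem IsStationaryIn.inter_Iio {S : Set Ordinal.{0}} (hS : IsStationaryIn S δ) :
    IsStationaryIn (S ∩ Iio δ) δ :=
  fun C hC => (hS C hC).imp fun _ ⟨hxS, hxC⟩ => ⟨⟨hxS, hC.1 hxC⟩, hxC⟩

theorem ReflectsAt.mono {S T : Set Ordinal.{0}} (hS : ReflectsAt S α) (h : S ⊆ T) :
    ReflectsAt T α :=
  ⟨hS.1, hS.2.mono (inter_subset_inter_left _ h)⟩

theorem lt_nfp_of_inflationary {g : Ordinal.{0} → Ordinal.{0}} (hg : ∀ x < δ, x < g x ∧ g x < δ)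
    (hρ : ρ < δ) : ρ < nfp g ρ :=
  (hg ρ hρ).1.trans_le (iterate_le_nfp g ρ 1)

theorem isLimitPointOf_nfp {g : Ordinal.{0} → Ordinal.{0}} (hg : ∀ x < δ, x < g x ∧ g x < δ)
    (hρ : ρ < δ) (hγ : γ < nfp g ρ) (hC : ∀ x < δ, γ < x → ∃ c ∈ C, x < c ∧ c ≤ g x) :
    IsLimitPointOf C (nfp g ρ) := by
  have hiter : ∀ n, g^[n] ρ < δ := by
    intro n
    induction n with
    | zero => exact hρ
    | succ n ih => rw [Function.iterate_succ_apply']; exact (hg _ ih).2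
  refine ⟨zero_le.trans_lt hγ, fun y hy => ?_⟩
  obtain ⟨n, hn⟩ := lt_nfp_iff.1 (max_lt hy hγ)
  obtain ⟨c, hcC, hxc, hcg⟩ := hC _ (hiter n) ((le_max_right y γ).trans_lt hn)
  have hc : c < nfp g ρ := calc
    c ≤ g^[n + 1] ρ := by rwa [Function.iterate_succ_apply']
    _ < g^[n + 2] ρ := by
      rw [Function.iterate_succ_apply' g (n + 1)]; exact (hg _ (hiter _)).1
    _ ≤ nfp g ρ := iterate_le_nfp g ρ _
  exact ⟨c, hcC, ((le_max_left y γ).trans_lt hn).trans hxc, hc⟩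

theorem IsClubIn.isClubIn_limitPoints (hδ : ℵ₀ < δ.cof) (hC : IsClubIn C δ) :
    IsClubIn (Iio δ ∩ {β | IsLimitPointOf C β}) δ := by
  obtain ⟨hsub, hunb, hcl⟩ := hC
  choose! next hnextC hnext using hunb
  have hg : ∀ x < δ, x < next x ∧ next x < δ := fun x hx => ⟨hnext x hx, hsub (hnextC x hx)⟩
  refine ⟨inter_subset_left, fun ρ hρ => ?_, fun α hα hlp => ⟨hα, hlp.1, fun y hy => ?_⟩⟩
  · have hρb := lt_nfp_of_inflationary hg hρ
    refine ⟨nfp next ρ, ⟨nfp_lt_ord hδ (fun x hx => (hg x hx).2) hρ, ?_⟩, hρb⟩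
    exact isLimitPointOf_nfp hg hρ hρb fun x hx _ => ⟨next x, hnextC x hx, hnext x hx, le_rfl⟩
  · obtain ⟨β, hβ, hyβ, hβα⟩ := hlp.2 y hy
    obtain ⟨c, hc, hyc, hcβ⟩ := hβ.2.2 y hyβ
    exact ⟨c, hc, hyc, hcβ.trans hβα⟩

end Clubs

section Families

variable {δ ρ : Ordinal.{0}}

theorem exists_common_limitPoint (hδ : ℵ₀ < δ.cof) {𝒮 : Set (Set Ordinal.{0})}
    (h𝒮 : ∀ C ∈ 𝒮, IsClubIn C δ) (hcard : #𝒮 < Cardinal.lift.{1} δ.cof) (hρ : ρ < δ) :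
    ∃ b, ρ < b ∧ b < δ ∧ ∀ C ∈ 𝒮, IsLimitPointOf C b := by
  have hδlim := isSuccLimit_of_aleph0_le_cof hδ.le
  have hunb : ∀ (C : 𝒮) x, ∃ c, x < δ → c ∈ (C : Set Ordinal) ∧ x < c ∧ c < δ := by
    intro C x
    by_cases hx : x < δ
    · obtain ⟨c, hc, hxc⟩ := (h𝒮 C C.2).2.1 x hx
      exact ⟨c, fun _ => ⟨hc, hxc, (h𝒮 C C.2).1 hc⟩⟩
    · exact ⟨0, fun h => absurd h hx⟩
  choose next hnext using hunb
  have hsup : ∀ x < δ, ⨆ C, next C x < δ := fun x hx =>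
    lift_iSup_lt_of_lt_cof (by rwa [Cardinal.lift_uzero, ← lift_cof]) fun C => (hnext C x hx).2.2
  set g := fun x => max (succ x) (⨆ C, next C x)
  have hg : ∀ x < δ, x < g x ∧ g x < δ := fun x hx =>
    ⟨(lt_succ x).trans_le (le_max_left _ _), max_lt (hδlim.succ_lt hx) (hsup x hx)⟩
  have hρb := lt_nfp_of_inflationary hg hρ
  refine ⟨nfp g ρ, hρb, nfp_lt_ord hδ (fun x hx => (hg x hx).2) hρ, fun C hC => ?_⟩
  refine isLimitPointOf_nfp hg hρ hρb fun x hx _ => ⟨next ⟨C, hC⟩ x, (hnext ⟨C, hC⟩ x hx).1,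
    (hnext _ x hx).2.1, ?_⟩
  have hbdd : BddAbove (range fun D : 𝒮 => next D x) :=
    ⟨δ, by rintro _ ⟨D, rfl⟩; exact (hnext D x hx).2.2.le⟩
  exact (le_ciSup hbdd _).trans (le_max_right _ _)

def diagInter (B : Ordinal.{0} → Set Ordinal.{0}) : Set Ordinal.{0} :=
  {b | ∀ γ < b, b ∈ B γ}

theorem isClubIn_diagInter {lam : Cardinal.{0}} (hlreg : lam.IsRegular) (hlunc : ℵ₀ < lam)
    {B : Ordinal.{0} → Set Ordinal.{0}} (hB : ∀ γ < lam.ord, IsClubIn (B γ) lam.ord) :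
    IsClubIn (Iio lam.ord ∩ diagInter B) lam.ord := by
  have hcof : lam.ord.cof = lam := hlreg.cof_ord
  have hlim : IsSuccLimit lam.ord := isSuccLimit_ord hlreg.aleph0_le
  have hunb : ∀ γ x, ∃ c, γ < lam.ord → x < lam.ord → c ∈ B γ ∧ x < c ∧ c < lam.ord := by
    intro γ x
    by_cases h : γ < lam.ord ∧ x < lam.ord
    · obtain ⟨c, hc, hxc⟩ := (hB γ h.1).2.1 x h.2
      exact ⟨c, fun _ _ => ⟨hc, hxc, (hB γ h.1).1 hc⟩⟩
    · exact ⟨0, fun hγ hx => absurd ⟨hγ, hx⟩ h⟩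
  choose next hnext using hunb
  have hsup : ∀ x < lam.ord, ⨆ γ : Iio x, next γ x < lam.ord := fun x hx =>
    lift_iSup_lt_of_lt_cof
      (by rw [Cardinal.lift_uzero, ← lift_cof, hcof, Cardinal.mk_Iio_ordinal, Cardinal.lift_lt]
          exact lt_ord.1 hx)
      fun γ => (hnext γ x (γ.2.trans hx) hx).2.2
  set g := fun x => max (succ x) (⨆ γ : Iio x, next γ x)
  have hg : ∀ x < lam.ord, x < g x ∧ g x < lam.ord := fun x hx =>
    ⟨(lt_succ x).trans_le (le_max_left _ _), max_lt (hlim.succ_lt hx) (hsup x hx)⟩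
  refine ⟨inter_subset_left, fun ρ hρ => ?_, fun α hα hlp => ⟨hα, fun γ hγ => ?_⟩⟩
  · have hb : nfp g ρ < lam.ord :=
      nfp_lt_ord (by rwa [hcof]) (fun x hx => (hg x hx).2) hρ
    refine ⟨nfp g ρ, ⟨hb, fun γ hγ => (hB γ (hγ.trans hb)).2.2 _ hb ?_⟩,
      lt_nfp_of_inflationary hg hρ⟩
    refine isLimitPointOf_nfp hg hρ hγ fun x hx hγx =>
      ⟨next γ x, (hnext γ x (hγ.trans hb) hx).1, (hnext γ x (hγ.trans hb) hx).2.1, ?_⟩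
    have hbdd : BddAbove (range fun γ : Iio x => next γ x) :=
      ⟨lam.ord, by rintro _ ⟨γ', rfl⟩; exact (hnext γ' x (γ'.2.trans hx) hx).2.2.le⟩
    exact (le_ciSup hbdd ⟨γ, hγx⟩).trans (le_max_right _ _)
  · refine (hB γ (hγ.trans hα)).2.2 α hα ⟨hlp.1, fun y hy => ?_⟩
    obtain ⟨d, ⟨-, hd⟩, hd₁, hd₂⟩ := hlp.2 (max y γ) (max_lt hy hγ)
    exact ⟨d, hd γ ((le_max_right y γ).trans_lt hd₁), (le_max_left y γ).trans_lt hd₁, hd₂⟩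

end Families

section HighCofinality

variable {kappa lam : Cardinal.{0}}

-- Adding `Ici lam.ord` makes the set unbounded, as `enumOrd` requires, without changing its
-- enumeration below `lam.ord`.
theorem enumOrd_union_Ici_mem (hlreg : lam.IsRegular) {C : Set Ordinal.{0}}
    (hsub : C ⊆ Iio lam.ord) (hunb : ∀ β < lam.ord, ∃ γ ∈ C, β < γ) :
    ∀ i < lam.ord, enumOrd (C ∪ Ici lam.ord) i ∈ C := by
  have hS : ¬BddAbove (C ∪ Ici lam.ord) := fun h =>
    not_bddAbove_Ici lam.ord (h.mono subset_union_right)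
  intro i
  induction i using WellFoundedLT.induction with
  | ind i IH =>
    intro hi
    have hbdd : BddAbove (range fun j : Iio i => enumOrd (C ∪ Ici lam.ord) j) :=
      ⟨lam.ord, by rintro _ ⟨j, rfl⟩; exact (hsub (IH j j.2 (j.2.trans hi))).le⟩
    have hsup : ⨆ j : Iio i, enumOrd (C ∪ Ici lam.ord) j < lam.ord :=
      lift_iSup_lt_of_lt_cof
        (by rw [Cardinal.lift_uzero, ← lift_cof, hlreg.cof_ord, Cardinal.mk_Iio_ordinal,
              Cardinal.lift_lt]
            exact lt_ord.1 hi)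
        fun j => hsub (IH j j.2 (j.2.trans hi))
    obtain ⟨c, hc, hsupc⟩ := hunb _ hsup
    have hle : enumOrd (C ∪ Ici lam.ord) i ≤ c :=
      enumOrd_le_of_forall_lt (Or.inl hc) fun j hj => (le_ciSup hbdd ⟨j, hj⟩).trans_lt hsupc
    refine (enumOrd_mem hS i).resolve_right fun h => ?_
    exact (hle.trans_lt (hsub hc)).not_ge h

theorem isStationaryIn_setOf_le_cof (hkreg : kappa.IsRegular) (hkl : kappa < lam)
    (hlreg : lam.IsRegular) : IsStationaryIn {b | kappa ≤ b.cof} lam.ord := by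
  intro C hC
  set f := enumOrd (C ∪ Ici lam.ord)
  have hmono : StrictMono f :=
    enumOrd_strictMono fun h => not_bddAbove_Ici lam.ord (h.mono subset_union_right)
  have hfC : ∀ i < kappa.ord, f i ∈ C := fun i hi =>
    enumOrd_union_Ici_mem hlreg hC.1 hC.2.1 i (hi.trans (ord_lt_ord.2 hkl))
  have hklim : IsSuccLimit kappa.ord := isSuccLimit_ord hkreg.aleph0_le
  have hbdd : BddAbove (range fun i : Iio kappa.ord => f i) :=
    ⟨lam.ord, by rintro _ ⟨i, rfl⟩; exact (hC.1 (hfC i i.2)).le⟩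
  set b := ⨆ i : Iio kappa.ord, f i
  have hfb : ∀ i < kappa.ord, f i < b := fun i hi =>
    (hmono (lt_succ i)).trans_le (le_ciSup hbdd ⟨succ i, hklim.succ_lt hi⟩)
  have hb : b < lam.ord :=
    lift_iSup_lt_of_lt_cof
      (by rwa [Cardinal.lift_uzero, ← lift_cof, hlreg.cof_ord, Cardinal.mk_Iio_ordinal,
            Cardinal.lift_lt, card_ord])
      fun i => hC.1 (hfC i i.2)
  have hcof : b.cof = kappa := by
    rw [← hkreg.cof_ord]
    exact cof_iSup_Iio (hmono.comp (Subtype.strictMono_coe _)) hklim.isSuccPrelimit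
  refine ⟨b, hcof.ge, hC.2.2 b hb ⟨zero_le.trans_lt (hfb 0 hkreg.ord_pos), fun y hy => ?_⟩⟩
  obtain ⟨i, hi⟩ := (lt_ciSup_iff' hbdd).1 hy
  exact ⟨f i, hfC i i.2, hi, hfb i i.2⟩

end HighCofinality

section CoherentSequences

variable {𝒞 : Ordinal.{0} → Set (Set Ordinal.{0})}

def allAccumulateAt (𝒞 : Ordinal.{0} → Set (Set Ordinal.{0})) (γ : Ordinal.{0}) :
    Set Ordinal.{0} :=
  {β | ∀ C ∈ 𝒞 β, IsLimitPointOf C γ}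

def noneAccumulateAt (𝒞 : Ordinal.{0} → Set (Set Ordinal.{0})) (γ : Ordinal.{0}) :
    Set Ordinal.{0} :=
  {β | ∀ C ∈ 𝒞 β, ¬IsLimitPointOf C γ}

theorem exists_isStationaryIn_noneAccumulateAt_of_not_isFull {lam : Ordinal.{0}}
    (h : ¬IsFull lam 𝒞) :
    ∃ ξ < lam, ∀ γ, ξ ≤ γ → γ < lam → IsStationaryIn (noneAccumulateAt 𝒞 γ) lam := by
  unfold IsFull at h
  push Not at h
  obtain ⟨ξ, hξ, h⟩ := h
  refine ⟨ξ, hξ, fun γ hξγ hγ D hD => ?_⟩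
  obtain ⟨β, hβD, hβ⟩ := h γ hξγ hγ D hD
  exact ⟨β, hβ, hβD⟩

theorem not_reflectsAt_allAccumulateAt_and_noneAccumulateAt {lam : Ordinal.{0}}
    (hcoh : IsCoherentSeq lam 𝒞) {γ δ : Ordinal.{0}} (hδ : δ < lam)
    (h₁ : ReflectsAt (allAccumulateAt 𝒞 γ) δ) (h₂ : ReflectsAt (noneAccumulateAt 𝒞 γ) δ) :
    False := by
  obtain ⟨⟨C, hC⟩, hclubs, htrace⟩ := hcoh δ hδ (isSuccLimit_of_aleph0_le_cof h₁.1.le)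
  have hL := (hclubs C hC).isClubIn_limitPoints h₁.1
  obtain ⟨β₁, ⟨hβ₁, -⟩, hβ₁δ, hβ₁C⟩ := h₁.2 _ hL
  have hγ : IsLimitPointOf (C ∩ Iio β₁) γ := hβ₁ _ (htrace C hC β₁ hβ₁δ hβ₁C)
  obtain ⟨β₂, ⟨hβ₂, -⟩, ⟨hβ₂δ, hβ₂C⟩, hγβ₂⟩ :=
    h₂.2 _ (hL.inter_Ioi (hγ.le_of_inter_Iio.trans_lt hβ₁δ))
  exact hβ₂ _ (htrace C hC β₂ hβ₂δ hβ₂C) ((hγ.mono inter_subset_left).inter_Iio hγβ₂.le)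

theorem exists_isStationaryIn_allAccumulateAt {kappa lam : Cardinal.{0}}
    (hkreg : kappa.IsRegular) (hkunc : ℵ₀ < kappa) (hkl : kappa < lam) (hlreg : lam.IsRegular)
    (hcoh : IsCoherentSeq lam.ord 𝒞)
    (hwd : HasWidthLT lam.ord 𝒞 kappa) {ξ : Ordinal.{0}} (hξ : ξ < lam.ord) :
    ∃ γ, ξ ≤ γ ∧ γ < lam.ord ∧ IsStationaryIn (allAccumulateAt 𝒞 γ) lam.ord := by
  by_contra! h
  have hB : ∀ γ, ∃ B, IsClubIn B lam.ord ∧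
      (ξ ≤ γ → γ < lam.ord → ∀ β ∈ B, β ∉ allAccumulateAt 𝒞 γ) := by
    intro γ
    by_cases hγ : ξ ≤ γ ∧ γ < lam.ord
    · have := h γ hγ.1 hγ.2
      unfold IsStationaryIn at this
      push Not at this
      obtain ⟨B, hB, hdisj⟩ := this
      exact ⟨B, hB, fun _ _ β hβ hβA => (eq_empty_iff_forall_notMem.1 hdisj) β ⟨hβA, hβ⟩⟩
    · exact ⟨Iio lam.ord, isClubIn_Iio (isSuccLimit_ord hlreg.aleph0_le),
        fun h₁ h₂ => absurd ⟨h₁, h₂⟩ hγ⟩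
  choose B hBclub hBdisj using hB
  obtain ⟨b, hcof, ⟨hb, hbΔ⟩, hξb⟩ := isStationaryIn_setOf_le_cof hkreg hkl hlreg _
    ((isClubIn_diagInter hlreg (hkunc.trans hkl) fun γ _ => hBclub γ).inter_Ioi hξ)
  have hbcof : ℵ₀ < b.cof := hkunc.trans_le hcof
  have hblim := isSuccLimit_of_aleph0_le_cof hbcof.le
  obtain ⟨γ, hξγ, hγb, hγ⟩ := exists_common_limitPoint hbcof (hcoh b hb hblim).2.1
    ((hwd b hb hblim).trans_le (Cardinal.lift_le.2 hcof)) hξb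
  exact hBdisj γ hξγ.le (hγb.trans hb) b (hbΔ γ hγb) hγ

end CoherentSequences

theorem Refl_two_implies_square_full_general (kappa lam : Cardinal.{0})
    (hkreg : kappa.IsRegular) (hkunc : Cardinal.aleph0 < kappa)
    (hkl : kappa < lam)
    (hlreg : lam.IsRegular)
    (hrefl : ∀ T₁ T₂ : Set Ordinal.{0}, T₁ ⊆ Set.Iio lam.ord → T₂ ⊆ Set.Iio lam.ord →
      IsStationaryIn T₁ lam.ord → IsStationaryIn T₂ lam.ord →
      ∃ α < lam.ord, ReflectsAt T₁ α ∧ ReflectsAt T₂ α)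
    (𝒞 : Ordinal.{0} → Set (Set Ordinal.{0}))
    (hcoh : IsCoherentSeq lam.ord 𝒞) (hwd : HasWidthLT lam.ord 𝒞 kappa) :
    IsFull lam.ord 𝒞 := by
  by_contra hfull
  obtain ⟨ξ, hξ, hnone⟩ := exists_isStationaryIn_noneAccumulateAt_of_not_isFull hfull
  obtain ⟨γ, hξγ, hγ, hall⟩ :=
    exists_isStationaryIn_allAccumulateAt hkreg hkunc hkl hlreg hcoh hwd hξ
  obtain ⟨δ, hδ, h₁, h₂⟩ := hrefl _ _ inter_subset_right inter_subset_right
    hall.inter_Iio (hnone γ hξγ hγ).inter_Iio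
  exact not_reflectsAt_allAccumulateAt_and_noneAccumulateAt hcoh hδ
    (h₁.mono inter_subset_left) (h₂.mono inter_subset_left)

/-- If `κ < λ` are regular uncountable cardinals and `Refl(2, λ)`
holds (every pair of stationary subsets of `λ` reflects simultaneously), then every
`□(λ,<κ)`-sequence is full. -/
theorem Refl_two_implies_square_full (kappa lam : Cardinal.{0})
    (hkreg : kappa.IsRegular) (hkunc : Cardinal.aleph0 < kappa)
    (hkl : kappa < lam)
    (hlreg : lam.IsRegular) (hlunc : Cardinal.aleph0 < lam)
    (hrefl : ∀ T₁ T₂ : Set Ordinal.{0}, T₁ ⊆ Set.Iio lam.ord → T₂ ⊆ Set.Iio lam.ord →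
      IsStationaryIn T₁ lam.ord → IsStationaryIn T₂ lam.ord →
      ∃ α < lam.ord, ReflectsAt T₁ α ∧ ReflectsAt T₂ α)
    (𝒞 : Ordinal.{0} → Set (Set Ordinal.{0}))
    (hcoh : IsCoherentSeq lam.ord 𝒞) (hwd : HasWidthLT lam.ord 𝒞 kappa)
    (hnothread : ¬ ∃ T, IsThread lam.ord 𝒞 T) :
    IsFull lam.ord 𝒞 :=
  Refl_two_implies_square_full_general kappa lam hkreg hkunc hkl hlreg hrefl 𝒞 hcoh hwd
end

section
/- Suppose that λ ≥ ℵ₂ is a regular cardinal and S ⊆ λ is stationary. If uDSR(<λ, S) holds, then OSR(S) holds: for every sequence ⟨S_α : α < λ⟩ of stationary subsets of S there is an ordinal δ < λ of uncountable cofinality such that for all α < δ, S_α ∩ δ is stationary in δ. -/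
/-- `uDSR(<κ, S)`: as `DSR(<κ, S)`, but the set `F ⊆ γ` is only required
to be unbounded in `γ`. -/
def uDSR (kappa lam : Cardinal.{0}) (S : Set Ordinal.{0}) : Prop :=
  ∀ (j : Ordinal.{0} → Ordinal.{0}) (T : Ordinal.{0} → Ordinal.{0} → Set Ordinal.{0}),
    (∀ α < lam.ord, (j α).card < kappa) →
    (∀ α < lam.ord, ∀ i < j α, T α i ⊆ S ∧ IsStationaryIn (T α i) lam.ord) →
    ∃ γ < lam.ord, Cardinal.aleph0 < γ.cof ∧
      ∃ F, F ⊆ Set.Iio γ ∧ (∀ β < γ, ∃ α ∈ F, β < α) ∧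
        ∀ α ∈ F, ∀ i < j α, IsStationaryIn (T α i ∩ Set.Iio γ) γ

theorem uDSR_implies_OSR_general (lam : Cardinal.{0})
    (S : Set Ordinal.{0})
    (hudsr : uDSR lam lam S) :
    ∀ T : Ordinal.{0} → Set Ordinal.{0},
      (∀ α < lam.ord, T α ⊆ S ∧ IsStationaryIn (T α) lam.ord) →
      ∃ δ < lam.ord, Cardinal.aleph0 < δ.cof ∧
        ∀ α < δ, IsStationaryIn (T α ∩ Set.Iio δ) δ := by
  intro T hT
  -- Row `α` of the matrix lists the initial segment `⟨T i : i < α⟩`; it has fewer than `λ`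
  -- entries, and unboundedly many full rows below `γ` cover every `T i` with `i < γ`.
  obtain ⟨γ, hγ, hcof, F, -, hFunb, hFstat⟩ :=
    hudsr (fun α => α) (fun _ i => T i)
      (fun _ hα => Cardinal.lt_ord.mp hα)
      (fun _ hα i hi => hT i (hi.trans hα))
  refine ⟨γ, hγ, hcof, fun i hi => ?_⟩
  obtain ⟨α, hαF, hiα⟩ := hFunb i hi
  exact hFstat α hαF i hiα

/-- For a regular cardinal `λ ≥ ℵ₂` and stationary `S ⊆ λ`,
`uDSR(<λ, S)` implies `OSR(S)`. -/
theorem uDSR_implies_OSR (lam : Cardinal.{0})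
    (hlam : Cardinal.aleph 2 ≤ lam) (hreg : lam.IsRegular)
    (S : Set Ordinal.{0}) (hSsub : S ⊆ Set.Iio lam.ord)
    (hSstat : IsStationaryIn S lam.ord)
    (hudsr : uDSR lam lam S) :
    ∀ T : Ordinal.{0} → Set Ordinal.{0},
      (∀ α < lam.ord, T α ⊆ S ∧ IsStationaryIn (T α) lam.ord) →
      ∃ δ < lam.ord, Cardinal.aleph0 < δ.cof ∧
        ∀ α < δ, IsStationaryIn (T α ∩ Set.Iio δ) δ :=
  uDSR_implies_OSR_general lam S hudsr
end

section
/- Let λ be a regular uncountable cardinal and let ⟨S_α : α < λ⟩ be a sequence of subsets of λ. Let 𝕋 be the partial order whose conditions are pairs t = (c^t, d^t) where c^t is an ω-closed bounded subset of λ and d^t is a function with domain c^t such that for all α ∈ c^t, d^t(α) is a closed bounded subset of λ with d^t(α) ∩ S_α = ∅; and s ≤ t iff c^s end-extends c^t and, for all α ∈ c^t, d^s(α) end-extends d^t(α). For t ∈ 𝕋 and ε < λ, let t \ ε denote the condition (c^t \ ε, d^t ↾ (c^t \ ε)), and define π_{t,ε} on 𝕋/t (the set of conditions extending t) by π_{t,ε}(s)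 = s \ ε. If t ∈ 𝕋, ε < λ, and c^t \ ε is non-empty, then π_{t,ε} is a projection from 𝕋/t to 𝕋/(t \ ε): it is order-preserving, it maps t to t \ ε, and for all s ∈ 𝕋/t and all r ≤ s \ ε there is s* ≤ s such that s* \ ε ≤ r. -/
/-- `X` is an `ω`-closed set of ordinals: whenever `α` has cofinality `ω` and
`sup (X ∩ α) = α`, we have `α ∈ X`. -/
def OmegaClosed (X : Set Ordinal.{0}) : Prop :=
  ∀ α : Ordinal.{0}, α.cof = Cardinal.aleph0 → sSup (X ∩ Set.Iio α) = α → α ∈ X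

/-- `D` is a closed set of ordinals: it contains all of its limit points. -/
def IsClosedSetOfOrdinals (D : Set Ordinal.{0}) : Prop :=
  ∀ α, IsLimitPointOf D α → α ∈ D

/-- `c'` end-extends `c`: `c' ∩ sup {ξ + 1 : ξ ∈ c} = c`. -/
def EndExtends (c' c : Set Ordinal.{0}) : Prop :=
  c' ∩ {ξ : Ordinal.{0} | ∃ η ∈ c, ξ ≤ η} = c

/-- `(c, d)` is a condition of the poset `𝕋` (relative to `⟨S α : α < λ⟩`): `c` is an
`ω`-closed bounded subset of `λ`, and for every `α ∈ c`, `d α` is a closed bounded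
subset of `λ` disjoint from `S α`. -/
def IsTCond (lam : Ordinal.{0}) (S : Ordinal.{0} → Set Ordinal.{0})
    (c : Set Ordinal.{0}) (d : Ordinal.{0} → Set Ordinal.{0}) : Prop :=
  OmegaClosed c ∧ c ⊆ Set.Iio lam ∧ (∃ b < lam, ∀ ξ ∈ c, ξ ≤ b) ∧
    ∀ α ∈ c, IsClosedSetOfOrdinals (d α) ∧ d α ⊆ Set.Iio lam ∧
      (∃ b < lam, ∀ ξ ∈ d α, ξ ≤ b) ∧ d α ∩ S α = ∅

/-- The order of the poset `𝕋`: `(c₂, d₂) ≤ (c₁, d₁)` iff `c₂` end-extends `c₁` and,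
for all `α ∈ c₁`, `d₂ α` end-extends `d₁ α`. -/
def TLe (c₂ : Set Ordinal.{0}) (d₂ : Ordinal.{0} → Set Ordinal.{0})
    (c₁ : Set Ordinal.{0}) (d₁ : Ordinal.{0} → Set Ordinal.{0}) : Prop :=
  EndExtends c₂ c₁ ∧ ∀ α ∈ c₁, EndExtends (d₂ α) (d₁ α)

/-!
Given `s ≤ t` and `r ≤ s \ ε`, the witness is the amalgam
`s* = (c^s ∪ c^r, d^r ∪ d^s↾(c^s \ c^r))`. Since `c^s \ ε` is non-empty and `c^r` end-extends
it, `c^r` lies entirely above `ε`; hence `c^s ∪ c^r` end-extends `c^s` and cuts down to `c^r`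
above `ε`. `ω`-closedness survives the union because
`sup ((A ∪ B) ∩ α) = max (sup (A ∩ α)) (sup (B ∩ α))`.
-/

open Set

theorem endExtends_iff {c' c : Set Ordinal.{0}} :
    EndExtends c' c ↔ c ⊆ c' ∧ ∀ ξ ∈ c', ∀ η ∈ c, ξ ≤ η → ξ ∈ c := by
  constructor
  · intro h
    refine ⟨fun ξ hξ => (h.symm ▸ hξ : ξ ∈ c' ∩ _).1, fun ξ hξ η hη hle => ?_⟩
    rw [← h]
    exact ⟨hξ, η, hη, hle⟩
  · rintro ⟨hsub, hdown⟩
    ext ξ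
    exact ⟨fun ⟨hξ, η, hη, hle⟩ => hdown ξ hξ η hη hle, fun hξ => ⟨hsub hξ, ξ, hξ, le_rfl⟩⟩

namespace EndExtends

variable {c' c : Set Ordinal.{0}}

theorem refl (c : Set Ordinal.{0}) : EndExtends c c :=
  endExtends_iff.2 ⟨subset_rfl, fun _ hξ _ _ _ => hξ⟩

theorem subset (h : EndExtends c' c) : c ⊆ c' :=
  (endExtends_iff.1 h).1

theorem mem_of_le (h : EndExtends c' c) {ξ η : Ordinal.{0}} (hξ : ξ ∈ c') (hη : η ∈ c)
    (hle : ξ ≤ η) : ξ ∈ c :=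
  (endExtends_iff.1 h).2 ξ hξ η hη hle

theorem sdiff_Iio (h : EndExtends c' c) (ε : Ordinal.{0}) :
    EndExtends (c' \ Iio ε) (c \ Iio ε) :=
  endExtends_iff.2 ⟨sdiff_subset_sdiff_left h.subset,
    fun _ hξ _ hη hle => ⟨h.mem_of_le hξ.1 hη.1 hle, hξ.2⟩⟩

theorem subset_Ici {ε : Ordinal.{0}} (h : EndExtends c' (c \ Iio ε))
    (hne : (c \ Iio ε).Nonempty) : c' ⊆ Ici ε := by
  obtain ⟨η, hη⟩ := hne
  intro ξ hξ
  by_contra hlt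
  have hξε : ξ < ε := not_le.1 hlt
  exact (h.mem_of_le hξ hη (hξε.le.trans (notMem_Iio.1 hη.2))).2 hξε

theorem union_of_sdiff_Iio {ε : Ordinal.{0}} (h : EndExtends c' (c \ Iio ε))
    (hc' : c' ⊆ Ici ε) : EndExtends (c ∪ c') c := by
  refine endExtends_iff.2 ⟨subset_union_left, ?_⟩
  rintro ξ (hξ | hξ) η hη hle
  · exact hξ
  · exact (h.mem_of_le hξ ⟨hη, notMem_Iio.2 ((hc' hξ).trans hle)⟩ hle).1

end EndExtends

theorem union_sdiff_Iio_eq {c c' : Set Ordinal.{0}} {ε : Ordinal.{0}}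
    (h : EndExtends c' (c \ Iio ε)) (hc' : c' ⊆ Ici ε) : (c ∪ c') \ Iio ε = c' := by
  rw [union_sdiff_distrib,
    sdiff_eq_left.2 (disjoint_left.2 fun ξ hξ => notMem_Iio.2 (hc' hξ))]
  exact union_eq_right.2 h.subset

theorem sSup_inter_Iio_le {β : Type*} [ConditionallyCompleteLinearOrderBot β] (X : Set β)
    (a : β) : sSup (X ∩ Iio a) ≤ a :=
  csSup_le' fun _ hξ => hξ.2.le

theorem bddAbove_inter_Iio {β : Type*} [Preorder β] (X : Set β) (a : β) :
    BddAbove (X ∩ Iio a) :=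
  ⟨a, fun _ hξ => hξ.2.le⟩

theorem omegaClosed_Ici (ε : Ordinal.{0}) : OmegaClosed (Ici ε) := by
  intro α hcof hsup
  by_contra hαε
  have hempty : Ici ε ∩ Iio α = ∅ :=
    eq_empty_of_forall_notMem fun ξ hξ => hαε (mem_Ici.2 (hξ.1.trans hξ.2.le))
  rw [hempty, csSup_empty] at hsup
  rw [← hsup, Ordinal.bot_eq_zero, Ordinal.cof_zero] at hcof
  exact Cardinal.aleph0_ne_zero hcof.symm

namespace OmegaClosed

variable {X Y : Set Ordinal.{0}}

theorem inter (hX : OmegaClosed X) (hY : OmegaClosed Y) : OmegaClosed (X ∩ Y) := by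
  intro α hcof hsup
  have hle : ∀ Z, X ∩ Y ⊆ Z → sSup (Z ∩ Iio α) = α := fun Z hZ =>
    le_antisymm (sSup_inter_Iio_le Z α) <| hsup.symm.le.trans <|
      csSup_le_csSup' (bddAbove_inter_Iio Z α) (inter_subset_inter_left _ hZ)
  exact ⟨hX α hcof (hle X inter_subset_left), hY α hcof (hle Y inter_subset_right)⟩

theorem sdiff_Iio (hX : OmegaClosed X) (ε : Ordinal.{0}) : OmegaClosed (X \ Iio ε) := by
  rw [sdiff_eq, compl_Iio]
  exact hX.inter (omegaClosed_Ici ε)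

theorem union (hX : OmegaClosed X) (hY : OmegaClosed Y) : OmegaClosed (X ∪ Y) := by
  intro α hcof hsup
  rw [union_inter_distrib_right, csSup_union' (bddAbove_inter_Iio X α)
    (bddAbove_inter_Iio Y α)] at hsup
  rcases max_choice (sSup (X ∩ Iio α)) (sSup (Y ∩ Iio α)) with h | h
  · exact Or.inl (hX α hcof (h ▸ hsup))
  · exact Or.inr (hY α hcof (h ▸ hsup))

end OmegaClosed

namespace IsTCond

variable {lam : Ordinal.{0}} {S : Ordinal.{0} → Set Ordinal.{0}}

theorem sdiff_Iio {c : Set Ordinal.{0}} {d : Ordinal.{0} → Set Ordinal.{0}}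
    (h : IsTCond lam S c d) (ε : Ordinal.{0}) : IsTCond lam S (c \ Iio ε) d := by
  obtain ⟨hclosed, hsub, ⟨b, hb, hbound⟩, hd⟩ := h
  exact ⟨hclosed.sdiff_Iio ε, sdiff_subset.trans hsub, ⟨b, hb, fun ξ hξ => hbound ξ hξ.1⟩,
    fun α hα => hd α hα.1⟩

theorem union {c₁ c₂ : Set Ordinal.{0}} {d₁ d₂ : Ordinal.{0} → Set Ordinal.{0}}
    [DecidablePred (· ∈ c₂)]
    (h₁ : IsTCond lam S c₁ d₁) (h₂ : IsTCond lam S c₂ d₂) :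
    IsTCond lam S (c₁ ∪ c₂) (c₂.piecewise d₂ d₁) := by
  obtain ⟨hclosed₁, hsub₁, ⟨b₁, hb₁, hbound₁⟩, hd₁⟩ := h₁
  obtain ⟨hclosed₂, hsub₂, ⟨b₂, hb₂, hbound₂⟩, hd₂⟩ := h₂
  refine ⟨hclosed₁.union hclosed₂, union_subset hsub₁ hsub₂, ⟨max b₁ b₂, max_lt hb₁ hb₂, ?_⟩, ?_⟩
  · rintro ξ (hξ | hξ)
    · exact le_max_of_le_left (hbound₁ ξ hξ)
    · exact le_max_of_le_right (hbound₂ ξ hξ)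
  · intro α hα
    by_cases hα₂ : α ∈ c₂
    · rw [piecewise_eq_of_mem _ _ _ hα₂]
      exact hd₂ α hα₂
    · rw [piecewise_eq_of_notMem _ _ _ hα₂]
      exact hd₁ α (hα.resolve_right hα₂)

end IsTCond

theorem TLe.sdiff_Iio {c₂ c₁ : Set Ordinal.{0}} {d₂ d₁ : Ordinal.{0} → Set Ordinal.{0}}
    (h : TLe c₂ d₂ c₁ d₁) (ε : Ordinal.{0}) : TLe (c₂ \ Iio ε) d₂ (c₁ \ Iio ε) d₁ :=
  ⟨h.1.sdiff_Iio ε, fun α hα => h.2 α hα.1⟩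

theorem exists_tLe_of_tLe_sdiff_Iio {lam : Ordinal.{0}} {S : Ordinal.{0} → Set Ordinal.{0}}
    {cs cr : Set Ordinal.{0}} {ds dr : Ordinal.{0} → Set Ordinal.{0}} {ε : Ordinal.{0}}
    (hne : (cs \ Iio ε).Nonempty) (hs : IsTCond lam S cs ds) (hr : IsTCond lam S cr dr)
    (hrs : TLe cr dr (cs \ Iio ε) ds) :
    ∃ cst dst, IsTCond lam S cst dst ∧ TLe cst dst cs ds ∧ TLe (cst \ Iio ε) dst cr dr := by
  classical
  have hcr : cr ⊆ Ici ε := hrs.1.subset_Ici hne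
  refine ⟨cs ∪ cr, cr.piecewise dr ds, hs.union hr,
    ⟨hrs.1.union_of_sdiff_Iio hcr, fun α hα => ?_⟩, ?_⟩
  · by_cases hαr : α ∈ cr
    · rw [piecewise_eq_of_mem _ _ _ hαr]
      exact hrs.2 α ⟨hα, notMem_Iio.2 (hcr hαr)⟩
    · rw [piecewise_eq_of_notMem _ _ _ hαr]
      exact EndExtends.refl (ds α)
  · rw [union_sdiff_Iio_eq hrs.1 hcr]
    refine ⟨EndExtends.refl cr, fun α hα => ?_⟩
    rw [piecewise_eq_of_mem _ _ _ hα]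
    exact EndExtends.refl (dr α)

theorem projection_claim_general (lam : Cardinal.{0})
    (S : Ordinal.{0} → Set Ordinal.{0})
    (c : Set Ordinal.{0}) (d : Ordinal.{0} → Set Ordinal.{0})
    (ht : IsTCond lam.ord S c d)
    (ε : Ordinal.{0})
    (hne : (c \ Set.Iio ε).Nonempty) :
    IsTCond lam.ord S (c \ Set.Iio ε) d ∧
    (∀ cs ds, IsTCond lam.ord S cs ds → TLe cs ds c d →
      IsTCond lam.ord S (cs \ Set.Iio ε) ds ∧
        TLe (cs \ Set.Iio ε) ds (c \ Set.Iio ε) d) ∧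
    (∀ cs ds cs' ds', IsTCond lam.ord S cs ds → TLe cs ds c d →
      IsTCond lam.ord S cs' ds' → TLe cs' ds' c d → TLe cs' ds' cs ds →
      TLe (cs' \ Set.Iio ε) ds' (cs \ Set.Iio ε) ds) ∧
    (∀ cs ds, IsTCond lam.ord S cs ds → TLe cs ds c d →
      ∀ cr dr, IsTCond lam.ord S cr dr → TLe cr dr (cs \ Set.Iio ε) ds →
        ∃ cst dst, IsTCond lam.ord S cst dst ∧ TLe cst dst cs ds ∧
          TLe (cst \ Set.Iio ε) dst cr dr) :=
  ⟨ht.sdiff_Iio ε, fun _ _ hs hst => ⟨hs.sdiff_Iio ε, hst.sdiff_Iio ε⟩,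
    fun _ _ _ _ _ _ _ _ h => h.sdiff_Iio ε,
    fun _ _ hs hst _ _ hr hrs =>
      exists_tLe_of_tLe_sdiff_Iio (hne.mono (sdiff_subset_sdiff_left hst.1.subset)) hs hr hrs⟩

/-- Let `λ` be regular uncountable, `⟨S α : α < λ⟩` a sequence of
subsets of `λ`, and `𝕋` the poset of conditions `(c, d)` described in `IsTCond`/`TLe`.
If `t = (c, d)` is a condition, `ε < λ`, and `c \ ε ≠ ∅`, then the map
`π (s) = s \ ε` is a projection from `𝕋/t` to `𝕋/(t \ ε)`: `t \ ε` is a condition,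
`π` maps `𝕋/t` into `𝕋/(t \ ε)` (and maps `t` to `t \ ε`), `π` is order-preserving,
and for every `s ∈ 𝕋/t` and every `r ≤ s \ ε` there is `s* ≤ s` with `s* \ ε ≤ r`. -/
theorem projection_claim (lam : Cardinal.{0})
    (hreg : lam.IsRegular) (hunc : Cardinal.aleph0 < lam)
    (S : Ordinal.{0} → Set Ordinal.{0})
    (hS : ∀ α < lam.ord, S α ⊆ Set.Iio lam.ord)
    (c : Set Ordinal.{0}) (d : Ordinal.{0} → Set Ordinal.{0})
    (ht : IsTCond lam.ord S c d)
    (ε : Ordinal.{0}) (hε : ε < lam.ord)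
    (hne : (c \ Set.Iio ε).Nonempty) :
    IsTCond lam.ord S (c \ Set.Iio ε) d ∧
    (∀ cs ds, IsTCond lam.ord S cs ds → TLe cs ds c d →
      IsTCond lam.ord S (cs \ Set.Iio ε) ds ∧
        TLe (cs \ Set.Iio ε) ds (c \ Set.Iio ε) d) ∧
    (∀ cs ds cs' ds', IsTCond lam.ord S cs ds → TLe cs ds c d →
      IsTCond lam.ord S cs' ds' → TLe cs' ds' c d → TLe cs' ds' cs ds →
      TLe (cs' \ Set.Iio ε) ds' (cs \ Set.Iio ε) ds) ∧
    (∀ cs ds, IsTCond lam.ord S cs ds → TLe cs ds c d →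
      ∀ cr dr, IsTCond lam.ord S cr dr → TLe cr dr (cs \ Set.Iio ε) ds →
        ∃ cst dst, IsTCond lam.ord S cst dst ∧ TLe cst dst cs ds ∧
          TLe (cst \ Set.Iio ε) dst cr dr) :=
  projection_claim_general lam S c d ht ε hne
end
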